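/- arXiv:2309.00804 — 2 statements merged into one kernel-verified Lean document; each statement's English description precedes it below -/
import Mathlib

section
/- Strong (p,p) bound for the discrete weighted maximal operator: If 1 < p < ∞, ω ∈ A_p(ℤ), and x ∈ l^p_ω(ℤ), then M_ω x ∈ l^p_ω and Σ_{k∈ℤ} (M_ω x(k))^p ω(k) ≤ C Σ_{k∈ℤ} |x(k)|^p ω(k), with C depending only on p and the A_p norm of ω. -/
open Finset MeasureTheory
open scoped Classical

noncomputable section

/-- The symmetric interval `S_{m,N} = {k : |k - m| ≤ N}` as a finite set. -/
def Sint (m : ℤ) (N : ℕ) : Finset ℤ := Finset.Icc (m - N) (m + N)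

/-- `w(S) = Σ_{k ∈ S} w(k)`. -/
def wSum (w : ℤ → ℝ) (s : Finset ℤ) : ℝ := ∑ k ∈ s, w k

/-- Discrete weighted Morrey norm `‖x‖_{l^p_q(w,v)}`. -/
def morreyNorm (p q : ℝ) (w v : ℤ → ℝ) (x : ℤ → ℝ) : ℝ :=
  ⨆ mN : ℤ × ℕ, (wSum v (Sint mN.1 mN.2)) ^ (1/q - 1/p) *
    (∑ k ∈ Sint mN.1 mN.2, |x k| ^ p * w k) ^ (1/p)

/-- The discrete Muckenhoupt class `A₁(ℤ)`. -/
def discreteA1 (w : ℤ → ℝ) : Prop :=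
  ∃ C : ℝ, ∀ a b : ℤ, (hab : a ≤ b) →
    ((Finset.Icc a b).card : ℝ)⁻¹ * (∑ k ∈ Finset.Icc a b, w k) ≤
      C * (Finset.Icc a b).inf' (Finset.nonempty_Icc.mpr hab) w

/-- The discrete Muckenhoupt class `A_p(ℤ)` for `1 < p < ∞`. -/
def discreteAp (p : ℝ) (w : ℤ → ℝ) : Prop :=
  ∃ C : ℝ, ∀ a b : ℤ, a ≤ b →
    (((Finset.Icc a b).card : ℝ)⁻¹ * ∑ k ∈ Finset.Icc a b, w k) *
      (((Finset.Icc a b).card : ℝ)⁻¹ *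
        ∑ k ∈ Finset.Icc a b, (w k) ^ (-(p-1)⁻¹)) ^ (p-1) ≤ C

/-- The discrete weighted Hardy–Littlewood maximal operator `M_w`. -/
def maxW (w x : ℤ → ℝ) (m : ℤ) : ℝ :=
  ⨆ N : ℕ, (wSum w (Sint m N))⁻¹ * ∑ k ∈ Sint m N, |x k| * w k

/-- The discrete (unweighted) Hardy–Littlewood maximal operator `M`. -/
def maxHL (x : ℤ → ℝ) (m : ℤ) : ℝ :=
  ⨆ N : ℕ, ((2 * N + 1 : ℕ) : ℝ)⁻¹ * ∑ k ∈ Sint m N, |x k|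

/-! ### Auxiliary lemmas -/

section Aux

lemma three_int (at' bt au bu av bv k : ℤ) (h1 : au ≤ k) (h2 : k ≤ bu) (h3 : av ≤ k)
    (h4 : k ≤ bv) (h5 : au ≤ at') (h6 : bt ≤ bv) :
    Finset.Icc at' bt ⊆ Finset.Icc au bu ∪ Finset.Icc av bv := by
  intro y hy
  simp only [Finset.mem_Icc, Finset.mem_union] at *
  omega

/-- Covering lemma: a finite family of integer intervals has a subfamily with the
same union and pointwise overlap at most `2`. -/
lemma cover_exists (a b : ℤ → ℤ) :
    ∀ (n : ℕ) (J : Finset ℤ), J.card ≤ n →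
    ∃ K, K ⊆ J ∧
      J.biUnion (fun m => Finset.Icc (a m) (b m)) ⊆ K.biUnion (fun m => Finset.Icc (a m) (b m)) ∧
      ∀ k, (K.filter (fun m => k ∈ Finset.Icc (a m) (b m))).card ≤ 2 := by
  intro n
  induction n with
  | zero =>
    intro J hJ
    refine ⟨J, le_refl _, le_refl _, fun k => ?_⟩
    have : J = ∅ := Finset.card_eq_zero.mp (Nat.le_zero.mp hJ)
    simp [this]
  | succ n ih =>
    intro J hJ
    set I : ℤ → Finset ℤ := fun m => Finset.Icc (a m) (b m) with hI
    by_cases hrem : ∃ m ∈ J, I m ⊆ (J.erase m).biUnion I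
    · obtain ⟨m, hm, hsub⟩ := hrem
      obtain ⟨K, hK1, hK2, hK3⟩ := ih (J.erase m)
        (by have := Finset.card_erase_of_mem hm; omega)
      refine ⟨K, hK1.trans (Finset.erase_subset _ _), ?_, hK3⟩
      refine le_trans ?_ hK2
      intro k hk
      simp only [Finset.mem_biUnion] at hk ⊢
      obtain ⟨m', hm', hkm'⟩ := hk
      by_cases hmm : m' = m
      · subst hmm
        have := hsub hkm'
        simpa [Finset.mem_biUnion] using this
      · exact ⟨m', Finset.mem_erase.mpr ⟨hmm, hm'⟩, hkm'⟩
    · refine ⟨J, le_refl _, le_refl _, fun k => ?_⟩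
      by_contra hcard
      push_neg at hcard
      set s := J.filter (fun m => k ∈ I m) with hs
      have hsJ : s ⊆ J := Finset.filter_subset _ _
      have hks : ∀ m ∈ s, a m ≤ k ∧ k ≤ b m := by
        intro m hm
        have := (Finset.mem_filter.mp hm).2
        simpa [hI, Finset.mem_Icc] using this
      have hsne : s.Nonempty := Finset.card_pos.mp (by omega)
      obtain ⟨u, hu, hua⟩ := s.exists_min_image a hsne
      obtain ⟨v, hv, hvb⟩ := s.exists_max_image b hsne
      have : ∃ t ∈ s, t ≠ u ∧ t ≠ v := by
        by_contra h
        push_neg at h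
        have : s ⊆ {u, v} := by
          intro t ht
          rcases Classical.em (t = u) with h'|h'
          · simp [h']
          · simp [h t ht h']
        have := Finset.card_le_card this
        have h2 : ({u, v} : Finset ℤ).card ≤ 2 := Finset.card_insert_le _ _ |>.trans (by simp)
        omega
      obtain ⟨t, ht, htu, htv⟩ := this
      have hsubset : I t ⊆ I u ∪ I v := by
        refine three_int (a t) (b t) (a u) (b u) (a v) (b v) k (hks u hu).1 (hks u hu).2
          (hks v hv).1 (hks v hv).2 (hua t ht) (hvb t ht)
      apply hrem
      refine ⟨t, hsJ ht, ?_⟩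
      intro z hz
      rcases Finset.mem_union.mp (hsubset hz) with h'|h'
      · exact Finset.mem_biUnion.mpr ⟨u, Finset.mem_erase.mpr ⟨fun hh => htu hh.symm, hsJ hu⟩, h'⟩
      · exact Finset.mem_biUnion.mpr ⟨v, Finset.mem_erase.mpr ⟨fun hh => htv hh.symm, hsJ hv⟩, h'⟩

lemma sum_biUnion_mult (K : Finset ℤ) (I : ℤ → Finset ℤ) (g : ℤ → ℝ) :
    ∑ m ∈ K, ∑ k ∈ I m, g k
      = ∑ k ∈ K.biUnion I, ((K.filter (fun m => k ∈ I m)).card : ℝ) * g k := by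
  have h1 : ∀ m ∈ K, ∑ k ∈ I m, g k = ∑ k ∈ K.biUnion I, if k ∈ I m then g k else 0 := by
    intro m hm
    rw [← Finset.sum_filter]
    congr 1
    ext k
    simp only [Finset.mem_filter, Finset.mem_biUnion]
    exact ⟨fun hk => ⟨⟨m, hm, hk⟩, hk⟩, fun hk => hk.2⟩
  rw [Finset.sum_congr rfl h1, Finset.sum_comm]
  refine Finset.sum_congr rfl fun k _ => ?_
  rw [← Finset.sum_filter, Finset.sum_const, nsmul_eq_mul]

lemma wSum_pos {w : ℤ → ℝ} (hw : ∀ k, 0 < w k) (m : ℤ) (N : ℕ) : 0 < wSum w (Sint m N) := by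
  refine Finset.sum_pos (fun k _ => hw k) ?_
  refine ⟨m, ?_⟩
  simp [Sint, Finset.mem_Icc]

lemma mem_Sint_self (m : ℤ) (N : ℕ) : m ∈ Sint m N := by
  simp [Sint, Finset.mem_Icc]

lemma bddAbove_avg {w : ℤ → ℝ} (hw : ∀ k, 0 < w k) {y : ℤ → ℝ}
    (hy : Summable fun k => |y k| * w k) (m : ℤ) :
    BddAbove (Set.range fun N : ℕ => (wSum w (Sint m N))⁻¹ * ∑ k ∈ Sint m N, |y k| * w k) := by
  refine ⟨(w m)⁻¹ * ∑' k, |y k| * w k, ?_⟩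
  rintro z ⟨N, rfl⟩
  have h1 : wSum w (Sint m N) ≥ w m := by
    refine Finset.single_le_sum (f := w) (fun k _ => (hw k).le) (mem_Sint_self m N)
  have h2 : ∑ k ∈ Sint m N, |y k| * w k ≤ ∑' k, |y k| * w k :=
    Summable.sum_le_tsum _ (fun k _ => mul_nonneg (abs_nonneg _) (hw k).le) hy
  have h3 : (0:ℝ) ≤ ∑ k ∈ Sint m N, |y k| * w k :=
    Finset.sum_nonneg fun k _ => mul_nonneg (abs_nonneg _) (hw k).le
  have := wSum_pos hw m N
  calc (wSum w (Sint m N))⁻¹ * ∑ k ∈ Sint m N, |y k| * w k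
      ≤ (w m)⁻¹ * ∑ k ∈ Sint m N, |y k| * w k := by
        apply mul_le_mul_of_nonneg_right _ h3
        exact inv_anti₀ (hw m) h1
    _ ≤ (w m)⁻¹ * ∑' k, |y k| * w k := by
        apply mul_le_mul_of_nonneg_left h2 (inv_nonneg.mpr (hw m).le)

/-- Finite version of the weak type `(1,1)` estimate for `M_w`, with constant 2
(valid for arbitrary positive weights, via the bounded-overlap covering lemma). -/
lemma weak_finite {w : ℤ → ℝ} (hw : ∀ k, 0 < w k) {y : ℤ → ℝ}
    (hy : Summable fun k => |y k| * w k) {lam : ℝ} (hlam : 0 < lam) (E : Finset ℤ)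
    (hE : ∀ m ∈ E, lam < maxW w y m) :
    lam * ∑ m ∈ E, w m ≤ 2 * ∑' k, |y k| * w k := by
  set g : ℤ → ℝ := fun k => |y k| * w k with hg
  have hg0 : ∀ k, 0 ≤ g k := fun k => mul_nonneg (abs_nonneg _) (hw k).le
  have hch : ∀ m ∈ E, ∃ N : ℕ, lam * wSum w (Sint m N) < ∑ k ∈ Sint m N, g k := by
    intro m hm
    have h1 := hE m hm
    rw [maxW, lt_ciSup_iff (bddAbove_avg hw hy m)] at h1
    obtain ⟨N, hN⟩ := h1
    refine ⟨N, ?_⟩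
    have hpos := wSum_pos hw m N
    rw [inv_mul_eq_div, lt_div_iff₀ hpos] at hN
    linarith [hN]
  set Nf : ℤ → ℕ := fun m => if h : ∃ N : ℕ, lam * wSum w (Sint m N) < ∑ k ∈ Sint m N, g k
    then h.choose else 0 with hNf
  have hNf' : ∀ m ∈ E, lam * wSum w (Sint m (Nf m)) < ∑ k ∈ Sint m (Nf m), g k := by
    intro m hm
    have h := hch m hm
    simp only [hNf, dif_pos h]
    exact h.choose_spec
  set a : ℤ → ℤ := fun m => m - Nf m with ha
  set b : ℤ → ℤ := fun m => m + Nf m with hb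
  have hIcc : ∀ m, Sint m (Nf m) = Finset.Icc (a m) (b m) := fun m => rfl
  obtain ⟨K, hKE, hKcov, hKmult⟩ := cover_exists a b E.card E (le_refl _)
  set U := K.biUnion (fun m => Finset.Icc (a m) (b m)) with hU
  have hEU : E ⊆ U := by
    intro m hm
    apply hKcov
    exact Finset.mem_biUnion.mpr ⟨m, hm, by rw [← hIcc]; exact mem_Sint_self m (Nf m)⟩
  have step1 : ∑ m ∈ E, w m ≤ ∑ k ∈ U, w k :=
    Finset.sum_le_sum_of_subset_of_nonneg hEU (fun k _ _ => (hw k).le)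
  have step2 : ∑ k ∈ U, w k ≤ ∑ m ∈ K, wSum w (Sint m (Nf m)) := by
    have := sum_biUnion_mult K (fun m => Finset.Icc (a m) (b m)) w
    simp only [← hU] at this
    calc ∑ k ∈ U, w k
        ≤ ∑ k ∈ U, ((K.filter (fun m => k ∈ Finset.Icc (a m) (b m))).card : ℝ) * w k := by
          refine Finset.sum_le_sum fun k hk => ?_
          have h1 : 1 ≤ (K.filter (fun m => k ∈ Finset.Icc (a m) (b m))).card := by
            obtain ⟨m, hm, hkm⟩ := Finset.mem_biUnion.mp hk
            exact Finset.card_pos.mpr ⟨m, Finset.mem_filter.mpr ⟨hm, hkm⟩⟩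
          nlinarith [(hw k).le, (by exact_mod_cast h1 :
            (1:ℝ) ≤ ((K.filter (fun m => k ∈ Finset.Icc (a m) (b m))).card : ℝ))]
      _ = ∑ m ∈ K, ∑ k ∈ Finset.Icc (a m) (b m), w k := this.symm
      _ = ∑ m ∈ K, wSum w (Sint m (Nf m)) := by
          refine Finset.sum_congr rfl fun m _ => ?_
          rw [hIcc m]; rfl
  have step3 : lam * ∑ m ∈ K, wSum w (Sint m (Nf m)) ≤ ∑ m ∈ K, ∑ k ∈ Sint m (Nf m), g k := by
    rw [Finset.mul_sum]
    exact Finset.sum_le_sum fun m hm => (hNf' m (hKE hm)).le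
  have step4 : ∑ m ∈ K, ∑ k ∈ Sint m (Nf m), g k ≤ 2 * ∑ k ∈ U, g k := by
    have heq : ∑ m ∈ K, ∑ k ∈ Sint m (Nf m), g k
        = ∑ k ∈ U, ((K.filter (fun m => k ∈ Finset.Icc (a m) (b m))).card : ℝ) * g k := by
      rw [show (fun m => ∑ k ∈ Sint m (Nf m), g k) = fun m => ∑ k ∈ Finset.Icc (a m) (b m), g k
        from funext fun m => by rw [hIcc m]]
      exact sum_biUnion_mult K _ g
    rw [heq, Finset.mul_sum]
    refine Finset.sum_le_sum fun k _ => ?_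
    have := hKmult k
    have h2 : ((K.filter (fun m => k ∈ Finset.Icc (a m) (b m))).card : ℝ) ≤ 2 := by
      exact_mod_cast this
    nlinarith [hg0 k]
  have step5 : ∑ k ∈ U, g k ≤ ∑' k, g k := Summable.sum_le_tsum _ (fun k _ => hg0 k) hy
  calc lam * ∑ m ∈ E, w m ≤ lam * ∑ k ∈ U, w k := by nlinarith [step1]
    _ ≤ lam * ∑ m ∈ K, wSum w (Sint m (Nf m)) := by nlinarith [step2]
    _ ≤ ∑ m ∈ K, ∑ k ∈ Sint m (Nf m), g k := step3
    _ ≤ 2 * ∑ k ∈ U, g k := step4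
    _ ≤ 2 * ∑' k, g k := by nlinarith [step5]

lemma maxW_nonneg {w : ℤ → ℝ} (hw : ∀ k, 0 < w k) (x : ℤ → ℝ) (m : ℤ) : 0 ≤ maxW w x m := by
  refine Real.iSup_nonneg fun N => ?_
  exact mul_nonneg (inv_nonneg.mpr (wSum_pos hw m N).le)
    (Finset.sum_nonneg fun k _ => mul_nonneg (abs_nonneg _) (hw k).le)

lemma maxW_split {w : ℤ → ℝ} (hw : ∀ k, 0 < w k) {x y : ℤ → ℝ} {c : ℝ}
    (hxy : ∀ k, |x k| ≤ |y k| + c) (hy : Summable fun k => |y k| * w k) (m : ℤ) :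
    maxW w x m ≤ maxW w y m + c := by
  refine ciSup_le fun N => ?_
  have hpos := wSum_pos hw m N
  have h1 : ∑ k ∈ Sint m N, |x k| * w k
      ≤ (∑ k ∈ Sint m N, |y k| * w k) + c * wSum w (Sint m N) := by
    rw [wSum, Finset.mul_sum, ← Finset.sum_add_distrib]
    refine Finset.sum_le_sum fun k _ => ?_
    nlinarith [(hw k).le, hxy k]
  have h2 : (wSum w (Sint m N))⁻¹ * ∑ k ∈ Sint m N, |x k| * w k
      ≤ (wSum w (Sint m N))⁻¹ * ∑ k ∈ Sint m N, |y k| * w k + c := by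
    rw [← mul_le_mul_iff_right₀ hpos, mul_add, ← mul_assoc, ← mul_assoc, mul_inv_cancel₀ hpos.ne',
      one_mul, one_mul]
    linarith [h1]
  refine h2.trans ?_
  have := le_ciSup (bddAbove_avg hw hy m) N
  exact add_le_add_left this c

/-- Geometric sum over the integers `≤ J`. -/
lemma geomZ {ρ : ℝ} (hρ : 1 < ρ) (J : ℤ) :
    ∑' j : ℤ, (if j ≤ J then ENNReal.ofReal (ρ ^ j) else 0)
      ≤ ENNReal.ofReal (ρ ^ J * (1 - ρ⁻¹)⁻¹) := by
  have hρ0 : 0 < ρ := lt_trans one_pos hρ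
  have hinv : ρ⁻¹ < 1 := inv_lt_one_of_one_lt₀ hρ
  have hinv0 : 0 ≤ ρ⁻¹ := inv_nonneg.mpr hρ0.le
  rw [ENNReal.tsum_eq_iSup_sum]
  refine iSup_le fun s => ?_
  have heq : ∑ j ∈ s, (if j ≤ J then ENNReal.ofReal (ρ ^ j) else 0)
      = ENNReal.ofReal (∑ j ∈ s.filter (· ≤ J), ρ ^ j) := by
    rw [ENNReal.ofReal_sum_of_nonneg (fun j _ => (zpow_pos hρ0 j).le), ← Finset.sum_filter]
  rw [heq]
  apply ENNReal.ofReal_le_ofReal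
  set t := s.filter (· ≤ J) with ht
  rcases t.eq_empty_or_nonempty with h | hne
  · rw [h]
    simp only [Finset.sum_empty]
    have h1 : (0:ℝ) < 1 - ρ⁻¹ := by linarith
    positivity
  · set M := (J - t.min' hne + 1).toNat with hM
    have hsub : t ⊆ (Finset.range M).image (fun n : ℕ => J - n) := by
      intro j hj
      have hjJ : j ≤ J := (Finset.mem_filter.mp hj).2
      have hjm : t.min' hne ≤ j := Finset.min'_le t j hj
      refine Finset.mem_image.mpr ⟨(J - j).toNat, Finset.mem_range.mpr ?_, ?_⟩
      · omega
      · omega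
    calc ∑ j ∈ t, ρ ^ j ≤ ∑ j ∈ (Finset.range M).image (fun n : ℕ => J - n), ρ ^ j :=
          Finset.sum_le_sum_of_subset_of_nonneg hsub (fun j _ _ => (zpow_pos hρ0 j).le)
      _ = ∑ n ∈ Finset.range M, ρ ^ (J - (n:ℤ)) := by
          rw [Finset.sum_image]
          intro n _ n' _ h
          have h' : J - (n:ℤ) = J - (n':ℤ) := h
          omega
      _ = ∑ n ∈ Finset.range M, ρ ^ J * (ρ⁻¹) ^ n := by
          refine Finset.sum_congr rfl fun n _ => ?_
          rw [zpow_sub₀ hρ0.ne', zpow_natCast, div_eq_mul_inv, inv_pow]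
      _ = ρ ^ J * ∑ n ∈ Finset.range M, (ρ⁻¹) ^ n := by rw [Finset.mul_sum]
      _ ≤ ρ ^ J * (1 - ρ⁻¹)⁻¹ := by
          have hsum : ∑ n ∈ Finset.range M, (ρ⁻¹) ^ n ≤ (1 - ρ⁻¹)⁻¹ := by
            have := Summable.sum_le_tsum (Finset.range M) (fun n _ => pow_nonneg hinv0 n)
              (summable_geometric_of_lt_one hinv0 hinv)
            rwa [tsum_geometric_of_lt_one hinv0 hinv] at this
          nlinarith [zpow_pos hρ0 J, hsum]

lemma dyadic_exists {c : ℝ} (hc : 0 < c) : ∃ j : ℤ, (2:ℝ) ^ j < c ∧ c ≤ 2 ^ (j + 1) := by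
  set L := Real.logb 2 c with hL
  refine ⟨⌈L⌉ - 1, ?_, ?_⟩
  · have h1 : ((⌈L⌉ - 1 : ℤ) : ℝ) < L := by
      have := Int.ceil_lt_add_one L
      push_cast
      linarith
    have h2 : (2:ℝ) ^ ((⌈L⌉ - 1 : ℤ) : ℝ) < 2 ^ L :=
      Real.rpow_lt_rpow_left_iff (by norm_num : (1:ℝ) < 2) |>.mpr h1
    rwa [Real.rpow_intCast, Real.rpow_logb (by norm_num) (by norm_num) hc] at h2
  · have h1 : L ≤ ((⌈L⌉ - 1 + 1 : ℤ) : ℝ) := by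
      push_cast
      linarith [Int.le_ceil L]
    have h2 : (2:ℝ) ^ L ≤ 2 ^ ((⌈L⌉ - 1 + 1 : ℤ) : ℝ) :=
      Real.rpow_le_rpow_left_iff (by norm_num : (1:ℝ) < 2) |>.mpr h1
    rwa [Real.rpow_intCast, Real.rpow_logb (by norm_num) (by norm_num) hc] at h2

lemma zpow_rpow_eq {q : ℝ} (j : ℤ) : ((2:ℝ) ^ j) ^ q = ((2:ℝ) ^ q) ^ j := by
  rw [← Real.rpow_intCast (2:ℝ) j, ← Real.rpow_intCast ((2:ℝ) ^ q) j,
    ← Real.rpow_mul (by norm_num : (0:ℝ) ≤ 2), ← Real.rpow_mul (by norm_num : (0:ℝ) ≤ 2),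
    mul_comm]

/-- Per-`k` dyadic summation bound. -/
lemma per_k {p : ℝ} (hp : 1 < p) (c D : ℝ) (hc : 0 ≤ c) (hD : 0 ≤ D) :
    ∑' j : ℤ, (if (2:ℝ) ^ j / 2 < c then
        (ENNReal.ofReal ((2:ℝ) ^ p * ((2:ℝ) ^ j) ^ p) * ENNReal.ofReal (4 / (2:ℝ) ^ j)) *
          ENNReal.ofReal (c * D) else 0)
      ≤ ENNReal.ofReal ((4 * (2:ℝ) ^ p) * ((2:ℝ) ^ (p-1) * (1 - ((2:ℝ) ^ (p-1))⁻¹)⁻¹) *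
          (c ^ p * D)) := by
  have hp1 : (0:ℝ) < p - 1 := by linarith
  set ρ : ℝ := (2:ℝ) ^ (p-1) with hρdef
  have hρ : 1 < ρ := by
    have : (2:ℝ) ^ (0:ℝ) < (2:ℝ) ^ (p - 1) :=
      Real.rpow_lt_rpow_of_exponent_lt (by norm_num) hp1
    simpa using this
  have hρ0 : 0 < ρ := lt_trans one_pos hρ
  have hgeom0 : (0:ℝ) ≤ (1 - ρ⁻¹)⁻¹ := by
    have : ρ⁻¹ < 1 := inv_lt_one_of_one_lt₀ hρ
    have h0 : 0 < 1 - ρ⁻¹ := by linarith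
    positivity
  have h2p : (0:ℝ) < (2:ℝ) ^ p := Real.rpow_pos_of_pos (by norm_num) p
  rcases eq_or_lt_of_le hc with hc0 | hc0
  · have hneg : ∀ j : ℤ, ¬ ((2:ℝ) ^ j / 2 < c) := by
      intro j h
      have := zpow_pos (by norm_num : (0:ℝ) < 2) j
      rw [← hc0] at h
      linarith
    simp only [if_neg (hneg _), tsum_zero]
    exact zero_le
  · set L := Real.logb 2 c with hL
    set J : ℤ := ⌈L⌉ with hJ
    have hcL : (2:ℝ) ^ L = c := Real.rpow_logb (by norm_num) (by norm_num) hc0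
    have hterm : ∀ j : ℤ, (if (2:ℝ) ^ j / 2 < c then
        (ENNReal.ofReal ((2:ℝ) ^ p * ((2:ℝ) ^ j) ^ p) * ENNReal.ofReal (4 / (2:ℝ) ^ j)) *
          ENNReal.ofReal (c * D) else 0)
        ≤ (if j ≤ J then ENNReal.ofReal (ρ ^ j) else 0) *
            ENNReal.ofReal ((4 * (2:ℝ) ^ p) * (c * D)) := by
      intro j
      by_cases hcond : (2:ℝ) ^ j / 2 < c
      · have hjle : j ≤ J := by
          have h1 : (2:ℝ) ^ ((j:ℝ) - 1) < 2 ^ L := by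
            rw [Real.rpow_sub (by norm_num : (0:ℝ) < 2), Real.rpow_one, Real.rpow_intCast, hcL]
            exact hcond
          have h2 : (j:ℝ) - 1 < L :=
            (Real.rpow_lt_rpow_left_iff (by norm_num : (1:ℝ) < 2)).mp h1
          have h3 : (j:ℝ) < (J:ℝ) + 1 := by
            have := Int.le_ceil L
            rw [hJ]
            linarith
          exact_mod_cast Int.lt_add_one_iff.mp (by exact_mod_cast h3)
        rw [if_pos hcond, if_pos hjle]
        have hz := zpow_pos (by norm_num : (0:ℝ) < 2) j
        have hkey : ((2:ℝ) ^ j) ^ p / (2:ℝ) ^ j = ρ ^ j := by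
          rw [← Real.rpow_sub_one hz.ne' p, zpow_rpow_eq]
        have hnn1 : (0:ℝ) ≤ (2:ℝ) ^ p * ((2:ℝ) ^ j) ^ p :=
          mul_nonneg h2p.le (Real.rpow_nonneg hz.le p)
        have h4i : (0:ℝ) ≤ 4 / (2:ℝ) ^ j := by positivity
        rw [← ENNReal.ofReal_mul hnn1, ← ENNReal.ofReal_mul (mul_nonneg hnn1 h4i),
          ← ENNReal.ofReal_mul (zpow_pos hρ0 j).le]
        apply ENNReal.ofReal_le_ofReal
        apply le_of_eq
        calc (2:ℝ) ^ p * ((2:ℝ) ^ j) ^ p * (4 / (2:ℝ) ^ j) * (c * D)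
            = (((2:ℝ) ^ j) ^ p / (2:ℝ) ^ j) * (4 * (2:ℝ) ^ p) * (c * D) := by ring
          _ = ρ ^ j * (4 * (2:ℝ) ^ p * (c * D)) := by rw [hkey]; ring
      · rw [if_neg hcond]
        exact zero_le
    have hρJ : ρ ^ J ≤ (2:ℝ) ^ (p-1) * c ^ (p-1) := by
      have h2J : (2:ℝ) ^ J ≤ 2 * c := by
        have h1 : ((J:ℤ):ℝ) ≤ L + 1 := by
          have := Int.ceil_lt_add_one L
          rw [hJ]
          push_cast at this ⊢
          linarith
        have h2 : (2:ℝ) ^ ((J:ℤ):ℝ) ≤ 2 ^ (L + 1) :=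
          Real.rpow_le_rpow_left_iff (by norm_num : (1:ℝ) < 2) |>.mpr h1
        rw [Real.rpow_intCast, Real.rpow_add (by norm_num : (0:ℝ) < 2), Real.rpow_one, hcL]
          at h2
        linarith
      have h3 : ((2:ℝ) ^ J) ^ (p-1) ≤ (2 * c) ^ (p-1) :=
        Real.rpow_le_rpow (zpow_pos (by norm_num : (0:ℝ) < 2) J).le h2J hp1.le
      rw [zpow_rpow_eq] at h3
      rwa [Real.mul_rpow (by norm_num) hc0.le] at h3
    calc ∑' j : ℤ, (if (2:ℝ) ^ j / 2 < c then
          (ENNReal.ofReal ((2:ℝ) ^ p * ((2:ℝ) ^ j) ^ p) * ENNReal.ofReal (4 / (2:ℝ) ^ j)) *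
            ENNReal.ofReal (c * D) else 0)
        ≤ ∑' j : ℤ, (if j ≤ J then ENNReal.ofReal (ρ ^ j) else 0) *
            ENNReal.ofReal ((4 * (2:ℝ) ^ p) * (c * D)) := ENNReal.tsum_le_tsum hterm
      _ = (∑' j : ℤ, (if j ≤ J then ENNReal.ofReal (ρ ^ j) else 0)) *
            ENNReal.ofReal ((4 * (2:ℝ) ^ p) * (c * D)) := ENNReal.tsum_mul_right
      _ ≤ ENNReal.ofReal (ρ ^ J * (1 - ρ⁻¹)⁻¹) *
            ENNReal.ofReal ((4 * (2:ℝ) ^ p) * (c * D)) :=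
          mul_le_mul_left (geomZ hρ J) _
      _ ≤ ENNReal.ofReal ((4 * (2:ℝ) ^ p) * ((2:ℝ) ^ (p-1) * (1 - ((2:ℝ) ^ (p-1))⁻¹)⁻¹) *
            (c ^ p * D)) := by
          rw [← ENNReal.ofReal_mul (mul_nonneg (zpow_pos hρ0 J).le hgeom0)]
          apply ENNReal.ofReal_le_ofReal
          have hcp : c ^ (p-1) * c = c ^ p := by
            rw [Real.rpow_sub_one hc0.ne' p]
            field_simp
          have h1 : ρ ^ J * (1 - ρ⁻¹)⁻¹ * (4 * (2:ℝ) ^ p * (c * D))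
              ≤ ((2:ℝ) ^ (p-1) * c ^ (p-1)) * ((1 - ρ⁻¹)⁻¹ * (4 * (2:ℝ) ^ p * (c * D))) := by
            have := mul_le_mul_of_nonneg_right hρJ
              (mul_nonneg hgeom0 (by positivity : (0:ℝ) ≤ 4 * (2:ℝ) ^ p * (c * D)))
            linarith [this]
          refine h1.trans (le_of_eq ?_)
          calc ((2:ℝ) ^ (p-1) * c ^ (p-1)) * ((1 - ρ⁻¹)⁻¹ * (4 * (2:ℝ) ^ p * (c * D)))
              = (4 * (2:ℝ) ^ p) * ((2:ℝ) ^ (p-1) * (1 - ρ⁻¹)⁻¹) * ((c ^ (p-1) * c) * D) := by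
                ring
            _ = (4 * (2:ℝ) ^ p) * ((2:ℝ) ^ (p-1) * (1 - ((2:ℝ) ^ (p-1))⁻¹)⁻¹) *
                  (c ^ p * D) := by rw [hcp]

lemma cutoff_summable {p : ℝ} (hp : 1 < p) {w : ℤ → ℝ} (hw : ∀ k, 0 < w k) {x : ℤ → ℝ}
    (hx : Summable fun k : ℤ => |x k| ^ p * w k) {c : ℝ} (hc : 0 < c) :
    Summable fun k : ℤ => |if c < |x k| then x k else 0| * w k := by
  have hp1 : (0:ℝ) < p - 1 := by linarith
  refine Summable.of_nonneg_of_le (fun k => mul_nonneg (abs_nonneg _) (hw k).le)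
    (fun k => ?_) (hx.mul_left (c ^ (1 - p)))
  have hpow2 : (0:ℝ) < c ^ (1-p) := Real.rpow_pos_of_pos hc _
  by_cases h : c < |x k|
  · rw [if_pos h]
    have hxk : 0 < |x k| := lt_trans hc h
    have key : |x k| * c ^ (p - 1) ≤ |x k| ^ p := by
      have h1 : c ^ (p-1) ≤ |x k| ^ (p-1) := Real.rpow_le_rpow hc.le h.le hp1.le
      have h2 : |x k| * |x k| ^ (p-1) = |x k| ^ p := by
        nth_rewrite 1 [← Real.rpow_one |x k|]
        rw [← Real.rpow_add hxk]
        ring_nf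
      nlinarith [hxk]
    have hmul : c ^ (1-p) * c ^ (p-1) = 1 := by
      rw [← Real.rpow_add hc]
      norm_num
    have hle : |x k| ≤ c ^ (1-p) * |x k| ^ p := by
      have h3 := mul_le_mul_of_nonneg_left key hpow2.le
      calc |x k| = c ^ (1-p) * c ^ (p-1) * |x k| := by rw [hmul, one_mul]
        _ = c ^ (1-p) * (|x k| * c ^ (p-1)) := by ring
        _ ≤ c ^ (1-p) * |x k| ^ p := h3
    calc |x k| * w k ≤ (c ^ (1-p) * |x k| ^ p) * w k :=
          mul_le_mul_of_nonneg_right hle (hw k).le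
      _ = c ^ (1-p) * (|x k| ^ p * w k) := by ring
  · rw [if_neg h]
    simp only [abs_zero, zero_mul]
    have h1 : (0:ℝ) ≤ |x k| ^ p * w k := mul_nonneg (Real.rpow_nonneg (abs_nonneg _) p) (hw k).le
    nlinarith [hpow2]

lemma weak_ennreal {p : ℝ} (hp : 1 < p) {w : ℤ → ℝ} (hw : ∀ k, 0 < w k) {x : ℤ → ℝ}
    (hx : Summable fun k : ℤ => |x k| ^ p * w k) {lam : ℝ} (hlam : 0 < lam) :
    ∑' k : ℤ, (if lam < maxW w x k then ENNReal.ofReal (w k) else 0)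
      ≤ ENNReal.ofReal (4 / lam) *
        ∑' k : ℤ, (if lam / 2 < |x k| then ENNReal.ofReal (|x k| * w k) else 0) := by
  set y : ℤ → ℝ := fun k => if lam / 2 < |x k| then x k else 0 with hy
  have hlam2 : 0 < lam / 2 := by linarith
  have hysum : Summable fun k => |y k| * w k := cutoff_summable hp hw hx hlam2
  have habs : ∀ k, |y k| * w k = if lam / 2 < |x k| then |x k| * w k else 0 := by
    intro k
    simp only [hy]
    split <;> simp
  have hsplit : ∀ k, |x k| ≤ |y k| + lam / 2 := by
    intro k
    simp only [hy]
    split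
    · linarith [hlam2]
    · next h => push_neg at h; simp; linarith [h]
  have hsubset : ∀ m, lam < maxW w x m → lam / 2 < maxW w y m := by
    intro m hm
    have := maxW_split hw hsplit hysum m
    linarith
  set T : ℝ := ∑' k, |y k| * w k with hT
  have hT0 : 0 ≤ T := tsum_nonneg fun k => mul_nonneg (abs_nonneg _) (hw k).le
  have hrhs : ∑' k : ℤ, (if lam / 2 < |x k| then ENNReal.ofReal (|x k| * w k) else 0)
      = ENNReal.ofReal T := by
    rw [hT, ENNReal.ofReal_tsum_of_nonneg (fun k => mul_nonneg (abs_nonneg _) (hw k).le) hysum]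
    refine (tsum_congr fun k => ?_).symm
    rw [habs k]
    split <;> simp
  rw [hrhs, ← ENNReal.ofReal_mul (by positivity : (0:ℝ) ≤ 4 / lam)]
  rw [ENNReal.tsum_eq_iSup_sum]
  refine iSup_le fun s => ?_
  have hsum : ∑ k ∈ s, (if lam < maxW w x k then ENNReal.ofReal (w k) else 0)
      = ENNReal.ofReal (∑ k ∈ s.filter (fun k => lam < maxW w x k), w k) := by
    rw [ENNReal.ofReal_sum_of_nonneg (fun k _ => (hw k).le), ← Finset.sum_filter]
  rw [hsum]
  apply ENNReal.ofReal_le_ofReal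
  have hwk := weak_finite hw hysum hlam2 (s.filter (fun k => lam < maxW w x k))
    (fun m hm => hsubset m (Finset.mem_filter.mp hm).2)
  rw [← hT] at hwk
  rw [div_mul_eq_mul_div, le_div_iff₀ hlam]
  nlinarith [hwk]

end Aux

/-- strong `(p,p)` bound for the discrete weighted maximal operator. -/
theorem stmt14 (p : ℝ) (hp : 1 < p) (w : ℤ → ℝ) (hw : ∀ k, 0 < w k)
    (hAp : discreteAp p w) :
    ∃ C > 0, ∀ x : ℤ → ℝ, Summable (fun k : ℤ => |x k| ^ p * w k) →
      Summable (fun k : ℤ => (maxW w x k) ^ p * w k) ∧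
      ∑' k : ℤ, (maxW w x k) ^ p * w k ≤ C * ∑' k : ℤ, |x k| ^ p * w k := by
  have hp0 : (0:ℝ) < p := lt_trans one_pos hp
  have hp1 : (0:ℝ) < p - 1 := by linarith
  have hρ : 1 < (2:ℝ) ^ (p-1) := by
    have : (2:ℝ) ^ (0:ℝ) < (2:ℝ) ^ (p - 1) :=
      Real.rpow_lt_rpow_of_exponent_lt (by norm_num) hp1
    simpa using this
  have h2p : (0:ℝ) < (2:ℝ) ^ p := Real.rpow_pos_of_pos (by norm_num) p
  have hgeom : (0:ℝ) < (1 - ((2:ℝ) ^ (p-1))⁻¹)⁻¹ := by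
    have : ((2:ℝ) ^ (p-1))⁻¹ < 1 := inv_lt_one_of_one_lt₀ hρ
    have h0 : 0 < 1 - ((2:ℝ) ^ (p-1))⁻¹ := by linarith
    positivity
  set C : ℝ := (4 * (2:ℝ) ^ p) * ((2:ℝ) ^ (p-1) * (1 - ((2:ℝ) ^ (p-1))⁻¹)⁻¹) with hC
  have hCpos : 0 < C := by
    have := Real.rpow_pos_of_pos (by norm_num : (0:ℝ) < 2) (p-1)
    positivity
  refine ⟨C, hCpos, fun x hx => ?_⟩
  have hF0 : ∀ k, 0 ≤ maxW w x k := fun k => maxW_nonneg hw x k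
  have hterm0 : ∀ k, 0 ≤ (maxW w x k) ^ p * w k := fun k =>
    mul_nonneg (Real.rpow_nonneg (hF0 k) p) (hw k).le
  have hxterm0 : ∀ k : ℤ, 0 ≤ |x k| ^ p * w k := fun k =>
    mul_nonneg (Real.rpow_nonneg (abs_nonneg _) p) (hw k).le
  set A : ENNReal := ∑' k : ℤ, ENNReal.ofReal ((maxW w x k) ^ p * w k) with hA
  set g : ℤ → ℤ → ENNReal := fun j k =>
    if (2:ℝ) ^ j < maxW w x k then
      ENNReal.ofReal ((2:ℝ) ^ p * ((2:ℝ) ^ j) ^ p) * ENNReal.ofReal (w k) else 0 with hg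
  set h : ℤ → ℤ → ENNReal := fun j k =>
    if (2:ℝ) ^ j / 2 < |x k| then
      (ENNReal.ofReal ((2:ℝ) ^ p * ((2:ℝ) ^ j) ^ p) * ENNReal.ofReal (4 / (2:ℝ) ^ j)) *
        ENNReal.ofReal (|x k| * w k) else 0 with hh
  -- Step 1: dyadic decomposition
  have step1 : A ≤ ∑' (j : ℤ) (k : ℤ), g j k := by
    rw [ENNReal.tsum_comm]
    refine ENNReal.tsum_le_tsum fun k => ?_
    rcases (hF0 k).eq_or_lt with hk | hk
    · rw [← hk, Real.zero_rpow hp0.ne', zero_mul, ENNReal.ofReal_zero]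
      exact zero_le
    · obtain ⟨j, hj1, hj2⟩ := dyadic_exists hk
      refine le_trans ?_ (ENNReal.le_tsum j)
      simp only [hg, if_pos hj1]
      rw [← ENNReal.ofReal_mul (mul_nonneg h2p.le
        (Real.rpow_nonneg (zpow_pos (by norm_num : (0:ℝ) < 2) j).le p))]
      apply ENNReal.ofReal_le_ofReal
      have hFp : (maxW w x k) ^ p ≤ (2:ℝ) ^ p * ((2:ℝ) ^ j) ^ p := by
        have h1 : (maxW w x k) ^ p ≤ ((2:ℝ) ^ (j+1)) ^ p :=
          Real.rpow_le_rpow (hF0 k) hj2 hp0.le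
        have h2 : ((2:ℝ) ^ (j+1)) ^ p = (2:ℝ) ^ p * ((2:ℝ) ^ j) ^ p := by
          rw [zpow_add_one₀ (by norm_num : (2:ℝ) ≠ 0), mul_comm ((2:ℝ) ^ j) 2,
            Real.mul_rpow (by norm_num) (zpow_pos (by norm_num : (0:ℝ) < 2) j).le]
        rw [h2] at h1
        exact h1
      exact mul_le_mul_of_nonneg_right hFp (hw k).le
  -- Step 2: weak type estimate at each level
  have step2 : ∀ j : ℤ, ∑' k : ℤ, g j k ≤ ∑' k : ℤ, h j k := by
    intro j
    have hgj : ∑' k : ℤ, g j k = ENNReal.ofReal ((2:ℝ) ^ p * ((2:ℝ) ^ j) ^ p) *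
        ∑' k : ℤ, (if (2:ℝ) ^ j < maxW w x k then ENNReal.ofReal (w k) else 0) := by
      calc ∑' k : ℤ, g j k = ∑' k : ℤ, ENNReal.ofReal ((2:ℝ) ^ p * ((2:ℝ) ^ j) ^ p) *
            (if (2:ℝ) ^ j < maxW w x k then ENNReal.ofReal (w k) else 0) :=
          tsum_congr fun k => by simp only [hg, mul_ite, mul_zero]
        _ = _ := ENNReal.tsum_mul_left
    have hhj : ∑' k : ℤ, h j k = ENNReal.ofReal ((2:ℝ) ^ p * ((2:ℝ) ^ j) ^ p) *
        (ENNReal.ofReal (4 / (2:ℝ) ^ j) *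
          ∑' k : ℤ, (if (2:ℝ) ^ j / 2 < |x k| then ENNReal.ofReal (|x k| * w k) else 0)) := by
      calc ∑' k : ℤ, h j k = ∑' k : ℤ, ENNReal.ofReal ((2:ℝ) ^ p * ((2:ℝ) ^ j) ^ p) *
            (ENNReal.ofReal (4 / (2:ℝ) ^ j) *
              (if (2:ℝ) ^ j / 2 < |x k| then ENNReal.ofReal (|x k| * w k) else 0)) :=
          tsum_congr fun k => by simp only [hh, mul_ite, mul_zero, mul_assoc]
        _ = _ := by rw [ENNReal.tsum_mul_left, ENNReal.tsum_mul_left]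
    rw [hgj, hhj]
    exact mul_le_mul_right (weak_ennreal hp hw hx (zpow_pos (by norm_num : (0:ℝ) < 2) j)) _
  -- Step 3: sum in k using the geometric series
  have step3 : ∑' (j : ℤ) (k : ℤ), h j k ≤ ENNReal.ofReal C * ∑' k : ℤ,
      ENNReal.ofReal (|x k| ^ p * w k) := by
    rw [ENNReal.tsum_comm, ← ENNReal.tsum_mul_left (a := ENNReal.ofReal C)
      (f := fun k : ℤ => ENNReal.ofReal (|x k| ^ p * w k))]
    refine ENNReal.tsum_le_tsum fun k => ?_
    have := per_k hp (|x k|) (w k) (abs_nonneg _) (hw k).le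
    refine le_trans this ?_
    rw [← hC, ENNReal.ofReal_mul hCpos.le]
  have chain : A ≤ ENNReal.ofReal C * ENNReal.ofReal (∑' k : ℤ, |x k| ^ p * w k) := by
    refine (step1.trans ((ENNReal.tsum_le_tsum step2).trans step3)).trans ?_
    rw [ENNReal.ofReal_tsum_of_nonneg hxterm0 hx]
  have hAfin : A ≠ ⊤ := by
    refine ne_top_of_le_ne_top ?_ chain
    exact ENNReal.mul_ne_top ENNReal.ofReal_ne_top ENNReal.ofReal_ne_top
  constructor
  · have heq : (fun k : ℤ => (maxW w x k) ^ p * w k)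
        = fun k : ℤ => (ENNReal.ofReal ((maxW w x k) ^ p * w k)).toReal :=
      funext fun k => (ENNReal.toReal_ofReal (hterm0 k)).symm
    rw [heq]
    exact ENNReal.summable_toReal hAfin
  · have h1 : A.toReal = ∑' k : ℤ, (maxW w x k) ^ p * w k := by
      rw [hA, ENNReal.tsum_toReal_eq (fun k => ENNReal.ofReal_ne_top)]
      exact tsum_congr fun k => ENNReal.toReal_ofReal (hterm0 k)
    have h2 : A.toReal ≤ C * ∑' k : ℤ, |x k| ^ p * w k := by
      have h3 := ENNReal.toReal_mono ?_ chain
      · rwa [← ENNReal.ofReal_mul hCpos.le, ENNReal.toReal_ofReal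
          (mul_nonneg hCpos.le (tsum_nonneg hxterm0))] at h3
      · exact ENNReal.mul_ne_top ENNReal.ofReal_ne_top ENNReal.ofReal_ne_top
    rw [← h1]
    exact h2
end
end

section
/- Off-origin averaging estimate for power weights: Let 1 < p < q < ∞, ω(k) = |k|^β (k ≠ 0), ω(0) = 1, and x a nonnegative sequence with finite l^p_q(ω) Morrey norm. For every symmetric interval S_{m,N} with |m| ≥ 1 and N ≤ ⌊|m|/2⌋, one has (1/|S_{m,N}|) Σ_{k∈S_{m,N}} x(k) ≤ C |m|^{−β/q} |S_{m,N}|^{−1/q} ‖x‖_{l^p_q(ω)}, for arbitrary real β. -/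
open Finset MeasureTheory
open scoped Classical

noncomputable section

/-- The discrete power weight `w(k) = |k|^β` for `k ≠ 0`, `w(0) = 1`. -/
def powerWeight (β : ℝ) : ℤ → ℝ := fun k => if k = 0 then 1 else |(k : ℝ)| ^ β


/-!
On `S_{m,N}` with `2N ≤ |m|` every `k` satisfies `|m|/2 ≤ |k| ≤ 2|m|`, so the power weight is
comparable to the constant `c = |m|^β`, up to the factor `D = 2^|β|`. For a weight comparable to
a constant `c` on an interval of length `n`, Hölder's inequality bounds the average of `x` by
`(c n)^{-1/p}` times the `p`-th root of the weighted `l^p` sum, and the Morrey norm bounds that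
root by `w(S)^{1/p-1/q} ≈ (c n)^{1/p-1/q}`; the two powers of `c n` combine to `(c n)^{-1/q}`.
-/

lemma card_Sint (m : ℤ) (N : ℕ) : #(Sint m N) = 2 * N + 1 := by
  rw [Sint, Int.card_Icc]; omega

lemma abs_le_two_mul_abs_of_mem_Sint {m k : ℤ} {N : ℕ} (hN : 2 * (N : ℤ) ≤ |m|)
    (hk : k ∈ Sint m N) : |m| ≤ 2 * |k| ∧ |k| ≤ 2 * |m| := by
  simp only [Sint, mem_Icc] at hk
  simp only [Int.abs_eq_natAbs] at hN ⊢
  omega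

lemma rpow_le_two_rpow_abs_mul {a b : ℝ} (β : ℝ) (ha : 0 < a) (hb : 0 < b) (hab : a ≤ 2 * b)
    (hba : b ≤ 2 * a) : b ^ β ≤ 2 ^ |β| * a ^ β := by
  rcases le_or_gt 0 β with hβ | hβ
  · calc b ^ β ≤ (2 * a) ^ β := Real.rpow_le_rpow hb.le hba hβ
      _ = 2 ^ |β| * a ^ β := by rw [abs_of_nonneg hβ, Real.mul_rpow zero_le_two ha.le]
  · calc b ^ β ≤ (a / 2) ^ β := Real.rpow_le_rpow_of_nonpos (by positivity) (by linarith) hβ.le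
      _ = 2 ^ |β| * a ^ β := by
        rw [abs_of_neg hβ, Real.div_rpow ha.le zero_le_two, Real.rpow_neg zero_le_two]
        ring

lemma powerWeight_mem_Icc_of_mem_Sint (β : ℝ) {m k : ℤ} {N : ℕ} (hm : 1 ≤ |m|)
    (hN : 2 * (N : ℤ) ≤ |m|) (hk : k ∈ Sint m N) :
    powerWeight β k ∈ Set.Icc (|(m : ℝ)| ^ β / 2 ^ |β|) (2 ^ |β| * |(m : ℝ)| ^ β) := by
  obtain ⟨hmk, hkm⟩ := abs_le_two_mul_abs_of_mem_Sint hN hk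
  have hmk' : |(m : ℝ)| ≤ 2 * |(k : ℝ)| := by exact_mod_cast hmk
  have hkm' : |(k : ℝ)| ≤ 2 * |(m : ℝ)| := by exact_mod_cast hkm
  have hm0 : 0 < |(m : ℝ)| := by exact_mod_cast (show (0 : ℤ) < |m| by omega)
  have hk0 : 0 < |(k : ℝ)| := by linarith
  have hk : k ≠ 0 := by rintro rfl; simp at hk0
  simp only [powerWeight, hk, if_false, Set.mem_Icc]
  exact ⟨(div_le_iff₀' (by positivity)).2 (rpow_le_two_rpow_abs_mul β hk0 hm0 hkm' hmk'),
    rpow_le_two_rpow_abs_mul β hm0 hk0 hmk' hkm'⟩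

lemma inv_card_mul_sum_le_rpow {ι : Type*} (s : Finset ι) {p : ℝ} (hp : 1 ≤ p) {f : ι → ℝ}
    (hf : ∀ i, 0 ≤ f i) (hs : s.Nonempty) :
    (#s : ℝ)⁻¹ * ∑ i ∈ s, f i ≤ ((#s : ℝ)⁻¹ * ∑ i ∈ s, f i ^ p) ^ (1 / p) := by
  have h := Real.compact_inner_le_weight_mul_Lp_of_nonneg s hp (w := fun _ ↦ 1)
    (fun _ ↦ zero_le_one) hf
  simp only [one_mul, expect_const hs, Real.one_rpow, expect_eq_sum_div_card] at h
  simpa only [inv_mul_eq_div, one_div] using h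

lemma rpow_sum_le_morreyNorm {p q : ℝ} {w v x : ℤ → ℝ}
    (hx : BddAbove (Set.range fun mN : ℤ × ℕ =>
      (wSum v (Sint mN.1 mN.2)) ^ (1/q - 1/p) * (∑ k ∈ Sint mN.1 mN.2, |x k| ^ p * w k) ^ (1/p)))
    {m : ℤ} {N : ℕ} (hv : 0 < wSum v (Sint m N)) :
    (∑ k ∈ Sint m N, |x k| ^ p * w k) ^ (1/p) ≤
      wSum v (Sint m N) ^ (1/p - 1/q) * morreyNorm p q w v x := by
  have h : _ ≤ morreyNorm p q w v x := le_ciSup hx (m, N)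
  rwa [show 1/q - 1/p = -(1/p - 1/q) by ring, Real.rpow_neg hv.le,
    inv_mul_le_iff₀ (by positivity)] at h

lemma sum_le_inv_mul_sum_mul {ι : Type*} {s : Finset ι} {f w : ι → ℝ} {L : ℝ} (hL : 0 < L)
    (hf : ∀ i ∈ s, 0 ≤ f i) (hw : ∀ i ∈ s, L ≤ w i) :
    ∑ i ∈ s, f i ≤ L⁻¹ * ∑ i ∈ s, f i * w i := by
  rw [le_inv_mul_iff₀ hL, mul_sum]
  exact sum_le_sum fun i hi ↦ by rw [mul_comm]; exact mul_le_mul_of_nonneg_left (hw i hi) (hf i hi)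

lemma average_le_morreyNorm_of_comparable_weight {p q c D : ℝ} (hp : 1 ≤ p) (hpq : p ≤ q)
    (hc : 0 < c) (hD : 0 < D) {w x : ℤ → ℝ}
    (hx : BddAbove (Set.range fun mN : ℤ × ℕ =>
      (wSum w (Sint mN.1 mN.2)) ^ (1/q - 1/p) * (∑ k ∈ Sint mN.1 mN.2, |x k| ^ p * w k) ^ (1/p)))
    {m : ℤ} {N : ℕ} (hlow : ∀ k ∈ Sint m N, c / D ≤ w k) (hup : ∀ k ∈ Sint m N, w k ≤ D * c) :
    ((2 * N + 1 : ℕ) : ℝ)⁻¹ * ∑ k ∈ Sint m N, x k ≤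
      D ^ (2/p - 1/q) * c ^ (-(1/q)) * ((2 * N + 1 : ℕ) : ℝ) ^ (-(1/q)) *
        morreyNorm p q w w x := by
  set n : ℝ := ((2 * N + 1 : ℕ) : ℝ)
  set A := ∑ k ∈ Sint m N, |x k| ^ p * w k
  set W := wSum w (Sint m N)
  set M := morreyNorm p q w w x
  have hcard : (#(Sint m N) : ℝ) = n := by rw [card_Sint]
  have he : 0 ≤ 1/p - 1/q := sub_nonneg.2 (one_div_le_one_div_of_le (by linarith) hpq)
  have hW : c / D * n ≤ W := by
    simpa [W, wSum, hcard, mul_comm] using card_nsmul_le_sum _ _ _ hlow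
  have hW' : W ≤ D * c * n := by
    simpa [W, wSum, hcard, mul_comm] using sum_le_card_nsmul _ _ _ hup
  have hA : 0 ≤ A := sum_nonneg fun k hk ↦
    mul_nonneg (by positivity) ((div_pos hc hD).le.trans (hlow k hk))
  have hW0 : 0 < W := lt_of_lt_of_le (by positivity) hW
  have hmorrey : A ^ (1/p) ≤ W ^ (1/p - 1/q) * M := rpow_sum_le_morreyNorm hx hW0
  have hM : 0 ≤ M := (by positivity : 0 ≤ W ^ (1/q - 1/p) * A ^ (1/p)).trans (le_ciSup hx (m, N))
  have hconst : (n⁻¹ * (c / D)⁻¹) ^ (1/p) * (D * c * n) ^ (1/p - 1/q) =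
      D ^ (2/p - 1/q) * c ^ (-(1/q)) * n ^ (-(1/q)) := by
    rw [← Real.exp_log (by positivity : (0 : ℝ) < (n⁻¹ * (c / D)⁻¹) ^ (1/p) * _),
      ← Real.exp_log (by positivity : (0 : ℝ) < D ^ (2/p - 1/q) * c ^ (-(1/q)) * n ^ (-(1/q)))]
    congr 1
    simp (disch := positivity) only [Real.log_mul, Real.log_div, Real.log_inv, Real.log_rpow]
    ring
  calc n⁻¹ * ∑ k ∈ Sint m N, x k
      ≤ n⁻¹ * ∑ k ∈ Sint m N, |x k| := by gcongr; exact le_abs_self _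
    _ ≤ (n⁻¹ * ∑ k ∈ Sint m N, |x k| ^ p) ^ (1/p) := by
      simpa only [hcard] using inv_card_mul_sum_le_rpow (Sint m N) hp (fun k ↦ abs_nonneg (x k))
        ⟨m, by rw [Sint, mem_Icc]; omega⟩
    _ ≤ (n⁻¹ * (c / D)⁻¹) ^ (1/p) * A ^ (1/p) := by
      rw [← Real.mul_rpow (by positivity) hA, mul_assoc]
      gcongr
      exact sum_le_inv_mul_sum_mul (by positivity) (fun k _ ↦ by positivity) hlow
    _ ≤ (n⁻¹ * (c / D)⁻¹) ^ (1/p) * (W ^ (1/p - 1/q) * M) := by gcongr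
    _ ≤ (n⁻¹ * (c / D)⁻¹) ^ (1/p) * ((D * c * n) ^ (1/p - 1/q) * M) := by gcongr
    _ = D ^ (2/p - 1/q) * c ^ (-(1/q)) * n ^ (-(1/q)) * M := by rw [← hconst]; ring

/-- off-origin averaging estimate for power weights, for symmetric intervals
`S_{m,N}` with `|m| ≥ 1` and `N ≤ ⌊|m|/2⌋`. -/
theorem stmt19 (p q β : ℝ) (hp : 1 < p) (hpq : p < q) :
    ∃ C > 0, ∀ x : ℤ → ℝ, (∀ k, 0 ≤ x k) →
      BddAbove (Set.range fun mN : ℤ × ℕ =>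
        (wSum (powerWeight β) (Sint mN.1 mN.2)) ^ (1/q - 1/p) *
          (∑ k ∈ Sint mN.1 mN.2, |x k| ^ p * powerWeight β k) ^ (1/p)) →
      ∀ (m : ℤ) (N : ℕ), 1 ≤ |m| → 2 * (N : ℤ) ≤ |m| →
        ((2 * N + 1 : ℕ) : ℝ)⁻¹ * ∑ k ∈ Sint m N, x k ≤
          C * |(m : ℝ)| ^ (-(β/q)) * ((2 * N + 1 : ℕ) : ℝ) ^ (-(1/q)) *
            morreyNorm p q (powerWeight β) (powerWeight β) x := by
  refine ⟨(2 ^ |β|) ^ (2/p - 1/q), by positivity, fun x _ hx m N hm hN ↦ ?_⟩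
  have hm0 : 0 < |(m : ℝ)| := by exact_mod_cast (show (0 : ℤ) < |m| by omega)
  have hweight : ∀ k ∈ Sint m N, _ := fun k hk ↦ powerWeight_mem_Icc_of_mem_Sint β hm hN hk
  have h := average_le_morreyNorm_of_comparable_weight hp.le hpq.le (by positivity)
    (by positivity) hx (fun k hk ↦ (hweight k hk).1) (fun k hk ↦ (hweight k hk).2)
  rwa [← Real.rpow_mul hm0.le, mul_neg, mul_one_div] at h
end
end
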